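/- If a point p ∈ P²(ℂ) lies on none of the nine lines l_{1i}: x1 = ρ^i x0, l_{2i}: x2 = ρ^i x1, l_{3i}: x0 = ρ^i x2 (i = 0,1,2) and is not one of the nine points y_{1i} = (1:−ρ^i:0), y_{2i} = (0:1:−ρ^i), y_{3i} = (−ρ^i:0:1) (i = 0,1,2), then the G-orbit of p has exactly 18 elements. -/

import Mathlib

open Matrix Complex
open scoped LinearAlgebra.Projectivization

noncomputable section

/-- `ρ = exp(2πi/3)`, a primitive cube root of unity. -/
def ρ : ℂ := Complex.exp (2 * Real.pi * Complex.I / 3)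

lemma ρ_ne_zero : ρ ≠ 0 := Complex.exp_ne_zero _

/-- The polynomial `G_λ` as a function of `(y0, y1, y2)`. -/
def Gpoly (lam : ℂ) (y : Fin 3 → ℂ) : ℂ :=
  ((y 0) ^ 6 + (y 1) ^ 6 + (y 2) ^ 6)
    + 2 * (2 * lam ^ 3 - 1) * ((y 0) ^ 3 * (y 1) ^ 3 + (y 0) ^ 3 * (y 2) ^ 3
        + (y 1) ^ 3 * (y 2) ^ 3)
    - 6 * lam ^ 2 * (y 0) * (y 1) * (y 2) * ((y 0) ^ 3 + (y 1) ^ 3 + (y 2) ^ 3)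
    - 3 * lam * (lam ^ 3 - 4) * (y 0) ^ 2 * (y 1) ^ 2 * (y 2) ^ 2

/-- The substitution `y = y(x)`. -/
def subst (lam : ℂ) (x : Fin 3 → ℂ) : Fin 3 → ℂ :=
  ![3 * (x 0) ^ 2 - 3 * lam * (x 1) * (x 2),
    3 * (x 1) ^ 2 - 3 * lam * (x 0) * (x 2),
    3 * (x 2) ^ 2 - 3 * lam * (x 0) * (x 1)]

/-- The (evaluation of the) homogeneous polynomial `F_λ` of degree 12 in `(x0, x1, x2)`. -/
def Fpoly (lam : ℂ) (x : Fin 3 → ℂ) : ℂ := Gpoly lam (subst lam x)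

/-- The matrix `σ`. -/
def σmat : Matrix (Fin 3) (Fin 3) ℂ := !![0, 1, 0; 0, 0, 1; 1, 0, 0]

/-- The matrix `τ`. -/
def τmat : Matrix (Fin 3) (Fin 3) ℂ := !![1, 0, 0; 0, ρ, 0; 0, 0, ρ ^ 2]

/-- The matrix `ι`. -/
def ιmat : Matrix (Fin 3) (Fin 3) ℂ := !![1, 0, 0; 0, 0, 1; 0, 1, 0]

lemma σmat_det : σmat.det ≠ 0 := by
  simp [σmat, Matrix.det_fin_three]

lemma τmat_det : τmat.det ≠ 0 := by
  simpa [τmat, Matrix.det_fin_three, pow_succ] using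
    mul_ne_zero ρ_ne_zero (mul_ne_zero ρ_ne_zero ρ_ne_zero)

lemma ιmat_det : ιmat.det ≠ 0 := by
  simp [ιmat, Matrix.det_fin_three]

/-- `σ` as element of `GL₃(ℂ)`. -/
def σgl : GL (Fin 3) ℂ := Matrix.GeneralLinearGroup.mkOfDetNeZero σmat σmat_det

/-- `τ` as element of `GL₃(ℂ)`. -/
def τgl : GL (Fin 3) ℂ := Matrix.GeneralLinearGroup.mkOfDetNeZero τmat τmat_det

/-- `ι` as element of `GL₃(ℂ)`. -/
def ιgl : GL (Fin 3) ℂ := Matrix.GeneralLinearGroup.mkOfDetNeZero ιmat ιmat_det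

/-- The subgroup `G` of `GL₃(ℂ)` generated by `σ, τ, ι`. -/
def Hgrp : Subgroup (GL (Fin 3) ℂ) := Subgroup.closure {σgl, τgl, ιgl}

lemma mulVec_injective (M : GL (Fin 3) ℂ) :
    Function.Injective (M : Matrix (Fin 3) (Fin 3) ℂ).mulVecLin := by
  intro v w h
  have h' : (M : Matrix (Fin 3) (Fin 3) ℂ) *ᵥ v = (M : Matrix (Fin 3) (Fin 3) ℂ) *ᵥ w := h
  have h2 : ((M⁻¹ * M : GL (Fin 3) ℂ) : Matrix (Fin 3) (Fin 3) ℂ) *ᵥ v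
      = ((M⁻¹ * M : GL (Fin 3) ℂ) : Matrix (Fin 3) (Fin 3) ℂ) *ᵥ w := by
    simp only [Units.val_mul, ← Matrix.mulVec_mulVec]
    exact congrArg _ h'
  simpa using h2

/-- The action of `GL₃(ℂ)` on `ℙ²(ℂ)` given by `(M, [v]) ↦ [Mv]`. -/
def act (M : GL (Fin 3) ℂ) (p : ℙ ℂ (Fin 3 → ℂ)) : ℙ ℂ (Fin 3 → ℂ) :=
  Projectivization.map (M : Matrix (Fin 3) (Fin 3) ℂ).mulVecLin (mulVec_injective M) p

/-- The orbit of a point of `ℙ²(ℂ)` under the subgroup `G` generated by `σ, τ, ι`. -/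
def Horbit (p : ℙ ℂ (Fin 3 → ℂ)) : Set (ℙ ℂ (Fin 3 → ℂ)) :=
  {q | ∃ M ∈ Hgrp, act M p = q}

lemma vec_ne_zero {v : Fin 3 → ℂ} (i : Fin 3) (h : v i ≠ 0) : v ≠ 0 :=
  fun hv => h (by simp [hv])

/-- The point of `ℙ²(ℂ)` with homogeneous coordinates `(a : b : c)`, where the `i`-th
coordinate is nonzero. -/
def pt (a b c : ℂ) (i : Fin 3) (h : ![a, b, c] i ≠ 0) : ℙ ℂ (Fin 3 → ℂ) :=
  Projectivization.mk ℂ ![a, b, c] (vec_ne_zero i h)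

/-- The line `l_{1i} : x1 = ρ^i x0` in `ℙ²(ℂ)`. -/
def line₁ (i : Fin 3) : Set (ℙ ℂ (Fin 3 → ℂ)) :=
  {p | ∃ v : Fin 3 → ℂ, ∃ hv : v ≠ 0, Projectivization.mk ℂ v hv = p ∧
    v 1 = ρ ^ (i : ℕ) * v 0}

/-- The line `l_{2i} : x2 = ρ^i x1` in `ℙ²(ℂ)`. -/
def line₂ (i : Fin 3) : Set (ℙ ℂ (Fin 3 → ℂ)) :=
  {p | ∃ v : Fin 3 → ℂ, ∃ hv : v ≠ 0, Projectivization.mk ℂ v hv = p ∧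
    v 2 = ρ ^ (i : ℕ) * v 1}

/-- The line `l_{3i} : x0 = ρ^i x2` in `ℙ²(ℂ)`. -/
def line₃ (i : Fin 3) : Set (ℙ ℂ (Fin 3 → ℂ)) :=
  {p | ∃ v : Fin 3 → ℂ, ∃ hv : v ≠ 0, Projectivization.mk ℂ v hv = p ∧
    v 0 = ρ ^ (i : ℕ) * v 2}

/-- The nine lines, as a set of subsets of `ℙ²(ℂ)`. -/
def nineLines : Set (Set (ℙ ℂ (Fin 3 → ℂ))) :=
  {l | ∃ i : Fin 3, l = line₁ i ∨ l = line₂ i ∨ l = line₃ i}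

/-- The point `y_{1i} = (1 : -ρ^i : 0)`. -/
def ypt₁ (i : Fin 3) : ℙ ℂ (Fin 3 → ℂ) := pt 1 (-ρ ^ (i : ℕ)) 0 0 (by simp)

/-- The point `y_{2i} = (0 : 1 : -ρ^i)`. -/
def ypt₂ (i : Fin 3) : ℙ ℂ (Fin 3 → ℂ) := pt 0 1 (-ρ ^ (i : ℕ)) 1 (by simp)

/-- The point `y_{3i} = (-ρ^i : 0 : 1)`. -/
def ypt₃ (i : Fin 3) : ℙ ℂ (Fin 3 → ℂ) := pt (-ρ ^ (i : ℕ)) 0 1 2 (by simp)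

/-- The nine points `y_{ji}`, as a set. -/
def ninePoints : Set (ℙ ℂ (Fin 3 → ℂ)) :=
  {p | ∃ i : Fin 3, p = ypt₁ i ∨ p = ypt₂ i ∨ p = ypt₃ i}

/-- The twelve intersection points of the nine lines. -/
def twelvePoints : Set (ℙ ℂ (Fin 3 → ℂ)) :=
  {pt 1 0 0 0 (by simp), pt 0 1 0 1 (by simp), pt 0 0 1 2 (by simp),
   pt 1 1 1 0 (by simp), pt 1 ρ (ρ ^ 2) 0 (by simp), pt 1 (ρ ^ 2) ρ 0 (by simp),
   pt 1 1 ρ 0 (by simp), pt 1 ρ 1 0 (by simp), pt ρ 1 1 1 (by simp),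
   pt 1 1 (ρ ^ 2) 0 (by simp), pt 1 (ρ ^ 2) 1 0 (by simp), pt (ρ ^ 2) 1 1 1 (by simp)}

/-- The orbit `O(1:0:0)`. -/
def orb₁ : Set (ℙ ℂ (Fin 3 → ℂ)) :=
  {pt 1 0 0 0 (by simp), pt 0 1 0 1 (by simp), pt 0 0 1 2 (by simp)}

/-- The orbit `O(1:1:1)`. -/
def orb₂ : Set (ℙ ℂ (Fin 3 → ℂ)) :=
  {pt 1 1 1 0 (by simp), pt 1 ρ (ρ ^ 2) 0 (by simp), pt 1 (ρ ^ 2) ρ 0 (by simp)}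

/-- The orbit `O(1:1:ρ)`. -/
def orb₃ : Set (ℙ ℂ (Fin 3 → ℂ)) :=
  {pt 1 1 ρ 0 (by simp), pt 1 ρ 1 0 (by simp), pt ρ 1 1 1 (by simp)}

/-- The orbit `O(1:1:ρ²)`. -/
def orb₄ : Set (ℙ ℂ (Fin 3 → ℂ)) :=
  {pt 1 1 (ρ ^ 2) 0 (by simp), pt 1 (ρ ^ 2) 1 0 (by simp), pt (ρ ^ 2) 1 1 1 (by simp)}

/-!
Index coordinates by `ℤ/3`. Then `σ ^ b τ ^ c ι ^ s` sends `v` to `i ↦ ρ ^ (c (i + b)) v (±(i + b))`,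
and left multiplication by `σ`, `τ`, `ι` permutes these 18 maps up to scalars, so the orbit of
`[v]` is their image and it has 18 points unless `[v]` is fixed by a map
`v ↦ (j ↦ ρ ^ (γ j + δ) v (α j + β))` with `α = ±1` that is not a scalar. Off the nine lines the
cubes `v i ^ 3` are pairwise distinct. This excludes translations (`α = 1`, `β ≠ 0`: multiplying
the three equations gives `λ ^ 3 = 1`, and cubing one of them gives two equal cubes) and
non-scalar diagonal maps (two coordinates are nonzero). For a reflection (`α = -1`) the two
swapped coordinates give `λ ^ 3 = ±1`; `λ ^ 3 = 1` again gives two equal cubes, and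
`λ ^ 3 = -1` forces the fixed coordinate to vanish, so that `[v]` is one of the points `y_{ji}`.
-/

open Fin.CommRing

lemma ρ_isPrimitiveRoot : IsPrimitiveRoot ρ 3 := by
  simpa [ρ] using Complex.isPrimitiveRoot_exp 3 (by norm_num)

lemma exists_eq_ρ_pow_mul_of_pow_three_eq {a b : ℂ} (h : a ^ 3 = b ^ 3) :
    ∃ i : Fin 3, a = ρ ^ (i : ℕ) * b := by
  by_cases hb : b = 0
  · exact ⟨0, by simpa [hb] using h⟩
  obtain ⟨i, hi, hρi⟩ := ρ_isPrimitiveRoot.eq_pow_of_pow_eq_one (ξ := a / b) (by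
    rw [div_pow, h, div_self (pow_ne_zero 3 hb)])
  exact ⟨⟨i, hi⟩, by rw [Fin.val_mk, hρi, div_mul_cancel₀ a hb]⟩

def χ : AddChar (Fin 3) ℂ where
  toFun j := ρ ^ (j : ℕ)
  map_zero_eq_one' := by simp
  map_add_eq_mul' j k := by
    rw [Fin.val_add, ← pow_add, ← pow_mod_orderOf ρ (j + k), ← ρ_isPrimitiveRoot.eq_orderOf]

lemma χ_apply (j : Fin 3) : χ j = ρ ^ (j : ℕ) := rfl

lemma χ_injective : Function.Injective χ := fun j k h =>
  Fin.ext (ρ_isPrimitiveRoot.pow_inj j.isLt k.isLt h)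

lemma χ_pow_three (j : Fin 3) : χ j ^ 3 = 1 := by
  rw [← AddChar.map_nsmul_eq_pow, show 3 • j = 0 by revert j; decide, AddChar.map_zero_eq_one]

lemma χ_ne_zero (j : Fin 3) : χ j ≠ 0 :=
  fun h => by simpa [h] using χ_pow_three j

/-- The sign by which `ι ^ s` acts on indices. -/
def sgn (s : Fin 2) : Fin 3 := (-1) ^ (s : ℕ)

lemma sgn_mul_self (s : Fin 2) : sgn s * sgn s = 1 := by
  revert s; decide

lemma sgn_add_one (s : Fin 2) : sgn (s + 1) = -sgn s := by
  revert s; decide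

lemma sgn_injective : Function.Injective sgn := by
  decide

lemma σ_mulVec (w : Fin 3 → ℂ) : σmat *ᵥ w = fun i => w (i + 1) := by
  funext i
  fin_cases i <;> simp [σmat, mulVec, dotProduct, Fin.sum_univ_three]

lemma τ_mulVec (w : Fin 3 → ℂ) : τmat *ᵥ w = fun i => χ i * w i := by
  funext i
  fin_cases i <;> simp [τmat, mulVec, dotProduct, Fin.sum_univ_three, χ_apply]

lemma ι_mulVec (w : Fin 3 → ℂ) : ιmat *ᵥ w = fun i => w (-i) := by
  funext i
  fin_cases i <;> simp [ιmat, mulVec, dotProduct, Fin.sum_univ_three] <;> rfl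

lemma σ_pow_mulVec (n : ℕ) (w : Fin 3 → ℂ) : σmat ^ n *ᵥ w = fun i => w (i + (n : Fin 3)) := by
  induction n generalizing w with
  | zero => simp
  | succ n ih =>
    rw [pow_succ, ← mulVec_mulVec, σ_mulVec, ih]
    funext i
    push_cast
    ring_nf

lemma τ_pow_mulVec (n : ℕ) (w : Fin 3 → ℂ) :
    τmat ^ n *ᵥ w = fun i => χ ((n : Fin 3) * i) * w i := by
  induction n generalizing w with
  | zero => simp
  | succ n ih =>
    rw [pow_succ, ← mulVec_mulVec, τ_mulVec, ih]
    funext i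
    rw [← mul_assoc, ← AddChar.map_add_eq_mul]
    push_cast
    ring_nf

lemma ι_pow_mulVec (n : ℕ) (w : Fin 3 → ℂ) : ιmat ^ n *ᵥ w = fun i => w ((-1) ^ n * i) := by
  induction n generalizing w with
  | zero => simp
  | succ n ih =>
    rw [pow_succ, ← mulVec_mulVec, ι_mulVec, ih]
    funext i
    ring_nf

lemma coe_σgl : (σgl : Matrix (Fin 3) (Fin 3) ℂ) = σmat := rfl

lemma coe_τgl : (τgl : Matrix (Fin 3) (Fin 3) ℂ) = τmat := rfl

lemma coe_ιgl : (ιgl : Matrix (Fin 3) (Fin 3) ℂ) = ιmat := rfl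

/-- Up to scalars, these are the 18 elements of `G`. -/
def word (t : Fin 3 × Fin 3 × Fin 2) : GL (Fin 3) ℂ :=
  σgl ^ (t.1 : ℕ) * τgl ^ (t.2.1 : ℕ) * ιgl ^ (t.2.2 : ℕ)

lemma word_mem (t : Fin 3 × Fin 3 × Fin 2) : word t ∈ Hgrp := by
  refine mul_mem (mul_mem ?_ ?_) ?_ <;> exact pow_mem (Subgroup.subset_closure (by simp)) _

lemma word_mulVec (b c : Fin 3) (s : Fin 2) (w : Fin 3 → ℂ) :
    (word (b, c, s) : Matrix (Fin 3) (Fin 3) ℂ) *ᵥ w =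
      fun i => χ (c * (i + b)) * w (sgn s * (i + b)) := by
  simp only [word, Units.val_mul, Units.val_pow_eq_pow_val, coe_σgl, coe_τgl, coe_ιgl,
    ← mulVec_mulVec]
  rw [ι_pow_mulVec, τ_pow_mulVec, σ_pow_mulVec]
  simp only [Fin.cast_val_eq_self, sgn]

lemma act_mk (M : GL (Fin 3) ℂ) (v : Fin 3 → ℂ) (hv : v ≠ 0) :
    act M (Projectivization.mk ℂ v hv) =
      Projectivization.mk ℂ ((M : Matrix (Fin 3) (Fin 3) ℂ) *ᵥ v)
        (by simpa using (mulVec_injective M).ne_iff' (map_zero _) |>.2 hv) :=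
  Projectivization.map_mk _ _ _ _

lemma act_mul (M N : GL (Fin 3) ℂ) (x : ℙ ℂ (Fin 3 → ℂ)) :
    act (M * N) x = act M (act N x) := by
  induction x using Projectivization.ind with
  | h v hv => simp only [act_mk, Units.val_mul, mulVec_mulVec]

lemma act_one (x : ℙ ℂ (Fin 3 → ℂ)) : act 1 x = x := by
  induction x using Projectivization.ind with
  | h v hv => simp only [act_mk, Units.val_one, one_mulVec]

lemma act_inv_act (M : GL (Fin 3) ℂ) (x : ℙ ℂ (Fin 3 → ℂ)) : act M⁻¹ (act M x) = x := by
  rw [← act_mul, inv_mul_cancel, act_one]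

lemma act_eq_act_of_mulVec_eq_smul {M N : GL (Fin 3) ℂ} (a : ℂ)
    (h : ∀ v, (M : Matrix (Fin 3) (Fin 3) ℂ) *ᵥ v = a • (N : Matrix (Fin 3) (Fin 3) ℂ) *ᵥ v)
    (x : ℙ ℂ (Fin 3 → ℂ)) : act M x = act N x := by
  induction x using Projectivization.ind with
  | h v hv => rw [act_mk, act_mk, Projectivization.mk_eq_mk_iff']; exact ⟨a, (h v).symm⟩

lemma act_σgl_mul_word (b c : Fin 3) (s : Fin 2) (x : ℙ ℂ (Fin 3 → ℂ)) :
    act (σgl * word (b, c, s)) x = act (word (b + 1, c, s)) x := by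
  refine act_eq_act_of_mulVec_eq_smul 1 (fun v => ?_) x
  rw [one_smul, Units.val_mul, ← mulVec_mulVec, word_mulVec, word_mulVec, coe_σgl, σ_mulVec]
  funext i
  ring_nf

lemma act_τgl_mul_word (b c : Fin 3) (s : Fin 2) (x : ℙ ℂ (Fin 3 → ℂ)) :
    act (τgl * word (b, c, s)) x = act (word (b, c + 1, s)) x := by
  refine act_eq_act_of_mulVec_eq_smul (χ (-b)) (fun v => ?_) x
  rw [Units.val_mul, ← mulVec_mulVec, word_mulVec, word_mulVec, coe_τgl, τ_mulVec]
  funext i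
  simp only [Pi.smul_apply, smul_eq_mul, ← mul_assoc, ← AddChar.map_add_eq_mul]
  ring_nf

lemma act_ιgl_mul_word (b c : Fin 3) (s : Fin 2) (x : ℙ ℂ (Fin 3 → ℂ)) :
    act (ιgl * word (b, c, s)) x = act (word (-b, -c, s + 1)) x := by
  refine act_eq_act_of_mulVec_eq_smul 1 (fun v => ?_) x
  rw [one_smul, Units.val_mul, ← mulVec_mulVec, word_mulVec, word_mulVec, coe_ιgl, ι_mulVec,
    sgn_add_one]
  funext i
  ring_nf

def wordOrbit (p : ℙ ℂ (Fin 3 → ℂ)) : Set (ℙ ℂ (Fin 3 → ℂ)) :=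
  Set.range fun t => act (word t) p

lemma bijOn_act_wordOrbit {g : GL (Fin 3) ℂ} (hg : g ∈ ({σgl, τgl, ιgl} : Set _))
    (p : ℙ ℂ (Fin 3 → ℂ)) : Set.BijOn (act g) (wordOrbit p) (wordOrbit p) := by
  refine ⟨?_, fun x _ y _ h => by rw [← act_inv_act g x, h, act_inv_act], ?_⟩ <;>
    rintro _ ⟨⟨b, c, s⟩, rfl⟩ <;> simp only [← act_mul] <;> rcases hg with rfl | rfl | rfl
  · exact ⟨_, (act_σgl_mul_word b c s p).symm⟩
  · exact ⟨_, (act_τgl_mul_word b c s p).symm⟩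
  · exact ⟨_, (act_ιgl_mul_word b c s p).symm⟩
  · exact ⟨_, ⟨(b - 1, c, s), rfl⟩, by rw [← act_mul, act_σgl_mul_word, sub_add_cancel]⟩
  · exact ⟨_, ⟨(b, c - 1, s), rfl⟩, by rw [← act_mul, act_τgl_mul_word, sub_add_cancel]⟩
  · refine ⟨_, ⟨(-b, -c, s + 1), rfl⟩, ?_⟩
    rw [← act_mul, act_ιgl_mul_word, neg_neg, neg_neg, show s + 1 + 1 = s by revert s; decide]

lemma Horbit_eq_wordOrbit (p : ℙ ℂ (Fin 3 → ℂ)) : Horbit p = wordOrbit p := by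
  refine Set.Subset.antisymm ?_ (Set.range_subset_iff.2 fun t => ⟨word t, word_mem t, rfl⟩)
  rintro _ ⟨M, hM, rfl⟩
  induction hM using Subgroup.closure_induction_left with
  | one => exact ⟨0, by simp [word, act_one]⟩
  | mul_left g hg M _ ih => exact act_mul g M p ▸ (bijOn_act_wordOrbit hg p).mapsTo ih
  | inv_mul_cancel g hg M _ ih =>
    obtain ⟨q, hq, hgq⟩ := (bijOn_act_wordOrbit hg p).surjOn ih
    rwa [act_mul, ← hgq, act_inv_act]

/-- `[v]` avoids the nine lines (`cube_injective`) and the nine points `y_{ji}`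
(`cube_add_ne_zero`). -/
structure IsGeneric (v : Fin 3 → ℂ) : Prop where
  cube_injective : Function.Injective fun i => v i ^ 3
  cube_add_ne_zero : ∀ i, v i = 0 → v (i + 1) ^ 3 + v (i + 2) ^ 3 ≠ 0

namespace IsGeneric

variable {v : Fin 3 → ℂ}

lemma ne_zero_of_eq_zero (hv : IsGeneric v) {i j : Fin 3} (hij : i ≠ j) (hi : v i = 0) :
    v j ≠ 0 :=
  fun hj => hij (hv.cube_injective (by simp [hi, hj]))

lemma exists_pair_ne_zero (hv : IsGeneric v) : ∃ i j, i ≠ j ∧ v i ≠ 0 ∧ v j ≠ 0 := by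
  by_cases h0 : v 0 = 0
  · exact ⟨1, 2, by decide, hv.ne_zero_of_eq_zero (by decide) h0,
      hv.ne_zero_of_eq_zero (by decide) h0⟩
  by_cases h1 : v 1 = 0
  · exact ⟨0, 2, by decide, h0, hv.ne_zero_of_eq_zero (by decide) h1⟩
  · exact ⟨0, 1, by decide, h0, h1⟩

lemma eq_zero_of_fixed_diagonal (hv : IsGeneric v) {γ δ : Fin 3} {a : ℂ}
    (h : ∀ j, χ (γ * j + δ) * v j = a * v j) : γ = 0 := by
  obtain ⟨i, j, hij, hi, hj⟩ := hv.exists_pair_ne_zero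
  have hχ : γ * i + δ = γ * j + δ :=
    χ_injective ((mul_right_cancel₀ hi (h i)).trans (mul_right_cancel₀ hj (h j)).symm)
  have hcancel : ∀ γ i j δ : Fin 3, i ≠ j → γ * i + δ = γ * j + δ → γ = 0 := by decide
  exact hcancel γ i j δ hij hχ

lemma not_fixed_translation (hv : IsGeneric v) {β γ δ : Fin 3} {a : ℂ} (hβ : β ≠ 0)
    (h : ∀ j, χ (γ * j + δ) * v (j + β) = a * v j) : False := by
  have hne : ∀ j, j ≠ j + β := fun j => by simpa using hβ
  have hnz : ∀ j, v j ≠ 0 := fun j hj =>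
    hv.ne_zero_of_eq_zero (hne j) hj (by simpa [hj, χ_ne_zero] using h j)
  have e0 := h 0
  have e1 := h β
  have e2 := h (β + β)
  rw [zero_add] at e0
  have h3 : ∀ x : Fin 3, x + x + x = 0 := by decide
  rw [h3] at e2
  have hχ : χ (γ * 0 + δ) * χ (γ * β + δ) * χ (γ * (β + β) + δ) = 1 := by
    rw [← AddChar.map_add_eq_mul, ← AddChar.map_add_eq_mul, ← AddChar.map_zero_eq_one χ]
    congr 1
    linear_combination h3 (γ * β + δ)
  have ha : a ^ 3 = 1 := by
    refine mul_right_cancel₀ (mul_ne_zero (mul_ne_zero (hnz 0) (hnz β)) (hnz (β + β))) ?_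
    linear_combination -(χ (γ * β + δ) * v (β + β) * χ (γ * (β + β) + δ) * v 0) * e0
      - (a * v 0 * χ (γ * (β + β) + δ) * v 0) * e1 - (a * v 0 * a * v β) * e2
      + v 0 * v β * v (β + β) * hχ
  have hcube := congrArg (· ^ 3) e0
  simp only [mul_pow, χ_pow_three, one_mul, ha] at hcube
  exact hβ (hv.cube_injective hcube.symm).symm

lemma not_fixed_reflection (hv : IsGeneric v) {β γ δ : Fin 3} {a : ℂ}
    (h : ∀ j, χ (γ * j + δ) * v (-j + β) = a * v j) : False := by
  have hidx : ∀ β : Fin 3, -(-β) + β = -β ∧ -(-β + 1) + β = -β + 2 ∧ -(-β + 2) + β = -β + 1 := by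
    decide
  obtain ⟨i0, i1, i2⟩ := hidx β
  have e0 := h (-β)
  have e1 := h (-β + 1)
  have e2 := h (-β + 2)
  rw [i0] at e0
  rw [i1] at e1
  rw [i2] at e2
  have h12 : -β + 1 ≠ -β + 2 := by simp
  have hcube := congrArg (· ^ 3) e1
  simp only [mul_pow, χ_pow_three, one_mul] at hcube
  have ha : a ^ 3 ≠ 1 := fun ha => h12 (hv.cube_injective (by simp only [hcube, ha, one_mul]))
  by_cases hk : v (-β) = 0
  · have h1 : v (-β + 1) ≠ 0 := hv.ne_zero_of_eq_zero (by simp) hk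
    have h2 : v (-β + 2) ≠ 0 := hv.ne_zero_of_eq_zero (by simp) hk
    have hsq : a ^ 2 = χ (γ * (-β + 1) + δ) * χ (γ * (-β + 2) + δ) :=
      mul_right_cancel₀ (mul_ne_zero h1 h2) (by
        linear_combination -(χ (γ * (-β + 2) + δ) * v (-β + 1)) * e1 - (a * v (-β + 1)) * e2)
    have ha6 := congrArg (· ^ 3) hsq
    simp only [mul_pow, χ_pow_three, one_mul] at ha6
    have hneg : a ^ 3 = -1 := by
      rcases mul_eq_zero.1 (by linear_combination ha6 : (a ^ 3 - 1) * (a ^ 3 + 1) = 0) with h | h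
      · exact absurd (sub_eq_zero.1 h) ha
      · exact eq_neg_of_add_eq_zero_left h
    apply hv.cube_add_ne_zero (-β) hk
    rw [hcube, hneg]
    ring
  · exact ha (by rw [← mul_right_cancel₀ hk e0, χ_pow_three])

lemma trivial_of_fixed (hv : IsGeneric v) {α β γ δ : Fin 3} {a : ℂ} (hα : α * α = 1)
    (h : ∀ j, χ (γ * j + δ) * v (α * j + β) = a * v j) : α = 1 ∧ β = 0 ∧ γ = 0 := by
  have hsq : ∀ α : Fin 3, α * α = 1 → α = 1 ∨ α = -1 := by decide
  rcases hsq α hα with rfl | rfl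
  · simp only [one_mul] at h
    obtain rfl : β = 0 := by
      by_contra hβ
      exact hv.not_fixed_translation hβ h
    simp only [add_zero] at h
    exact ⟨rfl, rfl, hv.eq_zero_of_fixed_diagonal h⟩
  · simp only [neg_one_mul] at h
    exact (hv.not_fixed_reflection h).elim

lemma injective_act_word (hv : IsGeneric v) (hv0 : v ≠ 0) :
    Function.Injective fun t => act (word t) (Projectivization.mk ℂ v hv0) := by
  rintro ⟨b, c, s⟩ ⟨b', c', s'⟩ h
  obtain ⟨a, ha⟩ := (Projectivization.mk_eq_mk_iff' ℂ _ _ _ _).1 (by simpa only [act_mk] using h)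
  rw [word_mulVec, word_mulVec] at ha
  have key : ∀ j, χ ((c - c') * sgn s' * j + c * (b - b')) *
      v (sgn s * sgn s' * j + sgn s * (b - b')) = a * v j := by
    intro j
    -- compare the two vectors at the index `i` with `sgn s' * (i + b') = j`
    have hj := congrFun ha (sgn s' * j - b')
    have e1 : sgn s' * (sgn s' * j - b' + b') = j := by
      rw [sub_add_cancel, ← mul_assoc, sgn_mul_self, one_mul]
    have e2 : c * (sgn s' * j - b' + b) =
        (c - c') * sgn s' * j + c * (b - b') + c' * (sgn s' * j - b' + b') := by ring
    have e3 : sgn s * (sgn s' * j - b' + b) = sgn s * sgn s' * j + sgn s * (b - b') := by ring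
    simp only [Pi.smul_apply, smul_eq_mul] at hj
    rw [e1, e2, e3, AddChar.map_add_eq_mul] at hj
    refine mul_left_cancel₀ (χ_ne_zero (c' * (sgn s' * j - b' + b'))) ?_
    linear_combination -hj
  obtain ⟨hα, hβ, hγ⟩ := hv.trivial_of_fixed (by
    linear_combination sgn s' * sgn s' * sgn_mul_self s + sgn_mul_self s') key
  have hs : sgn s = sgn s' := by linear_combination sgn s' * hα - sgn s * sgn_mul_self s'
  have hb : b - b' = 0 := by linear_combination sgn s * hβ - (b - b') * sgn_mul_self s
  have hc : c - c' = 0 := by linear_combination sgn s' * hγ - (c - c') * sgn_mul_self s'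
  simp only [Prod.mk.injEq]
  exact ⟨sub_eq_zero.1 hb, sub_eq_zero.1 hc, sgn_injective hs⟩

end IsGeneric

lemma mk_eq_pt_of_eq_smul {v : Fin 3 → ℂ} (hv : v ≠ 0) {x y z : ℂ} {k : Fin 3}
    (hk : ![x, y, z] k ≠ 0) (a : ℂ) (h : v = a • ![x, y, z]) :
    Projectivization.mk ℂ v hv = pt x y z k hk :=
  (Projectivization.mk_eq_mk_iff' ℂ _ _ _ _).2 ⟨a, h.symm⟩

lemma isGeneric_of_forall_notMem {v : Fin 3 → ℂ} (hv : v ≠ 0)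
    (h₁ : ∀ l ∈ nineLines, Projectivization.mk ℂ v hv ∉ l)
    (h₂ : Projectivization.mk ℂ v hv ∉ ninePoints) : IsGeneric v where
  cube_injective := by
    have h01 : v 1 ^ 3 ≠ v 0 ^ 3 := fun h => by
      obtain ⟨i, hi⟩ := exists_eq_ρ_pow_mul_of_pow_three_eq h
      exact h₁ _ ⟨i, .inl rfl⟩ ⟨v, hv, rfl, hi⟩
    have h12 : v 2 ^ 3 ≠ v 1 ^ 3 := fun h => by
      obtain ⟨i, hi⟩ := exists_eq_ρ_pow_mul_of_pow_three_eq h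
      exact h₁ _ ⟨i, .inr (.inl rfl)⟩ ⟨v, hv, rfl, hi⟩
    have h20 : v 0 ^ 3 ≠ v 2 ^ 3 := fun h => by
      obtain ⟨i, hi⟩ := exists_eq_ρ_pow_mul_of_pow_three_eq h
      exact h₁ _ ⟨i, .inr (.inr rfl)⟩ ⟨v, hv, rfl, hi⟩
    intro i j hij
    fin_cases i <;> fin_cases j <;> simp_all [eq_comm]
  cube_add_ne_zero := by
    have p0 : v 0 = 0 → v 1 ^ 3 + v 2 ^ 3 ≠ 0 := fun hi hsum => by
      obtain ⟨k, hk⟩ := exists_eq_ρ_pow_mul_of_pow_three_eq (a := v 2) (b := -v 1)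
        (by linear_combination hsum)
      refine h₂ ⟨k, .inr (.inl (mk_eq_pt_of_eq_smul hv _ (v 1) ?_))⟩
      funext j
      fin_cases j <;> simp [hi, hk, mul_comm]
    have p1 : v 1 = 0 → v 2 ^ 3 + v 0 ^ 3 ≠ 0 := fun hi hsum => by
      obtain ⟨k, hk⟩ := exists_eq_ρ_pow_mul_of_pow_three_eq (a := v 0) (b := -v 2)
        (by linear_combination hsum)
      refine h₂ ⟨k, .inr (.inr (mk_eq_pt_of_eq_smul hv _ (v 2) ?_))⟩
      funext j
      fin_cases j <;> simp [hi, hk, mul_comm]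
    have p2 : v 2 = 0 → v 0 ^ 3 + v 1 ^ 3 ≠ 0 := fun hi hsum => by
      obtain ⟨k, hk⟩ := exists_eq_ρ_pow_mul_of_pow_three_eq (a := v 1) (b := -v 0)
        (by linear_combination hsum)
      refine h₂ ⟨k, .inl (mk_eq_pt_of_eq_smul hv _ (v 0) ?_)⟩
      funext j
      fin_cases j <;> simp [hi, hk, mul_comm]
    intro i
    fin_cases i
    exacts [p0, p1, p2]

/-- If a point of `ℙ²(ℂ)` lies on none of the nine lines and is not one of the nine points
`y_{ji}`, then its `G`-orbit has exactly 18 elements. -/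
theorem orbit_card_eighteen (p : ℙ ℂ (Fin 3 → ℂ))
    (h₁ : ∀ l ∈ nineLines, p ∉ l) (h₂ : p ∉ ninePoints) :
    (Horbit p).ncard = 18 := by
  induction p using Projectivization.ind with
  | h v hv =>
    have hgen := isGeneric_of_forall_notMem hv h₁ h₂
    rw [Horbit_eq_wordOrbit, wordOrbit, ← Set.image_univ, Set.ncard_image_of_injective _
      (hgen.injective_act_word hv), Set.ncard_univ, Nat.card_eq_fintype_card]
    rfl

end
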